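/- Suppose (x, p, β) satisfies the nSPPE conditions (2)–(5): x^t = 1 if β_{i(t)} v^t + β_p v_p^t ≥ p_{j(t)} and x^t = 0 otherwise; for every user j, Σ_{t ∈ 𝒯_j} x^t ≤ s_j with equality whenever p_j > 0; for every notification type i, Σ_{t ∈ 𝒯_i} x^t (p_{j(t)} − β_p v_p^t) = B_i; and Σ_{t ∈ [𝒯]} x^t β_p v_p^t = B_p; with p_j ≥ 0, β_i > 0 for all i, β_p ≥ 0, and v_p^t ≥ 0. Let f_i := B_i/(B_p + Σ_{k ∈ [n]} B_k). Then each notification type's utility is at least its proportional share utility: for every i and every vector x̄ with x̄^t ∈ [0,1] for t ∈ 𝒯_i satisfying Σ_{t ∈ 𝒯_i ∩ 𝒯_j} x̄^t ≤ f_i · s_j for every user j, it holds that Σ_{t ∈ 𝒯_i} x^t v^t ≥ Σ_{t ∈ 𝒯_i} x̄^t v^t. In particular, this holds for the allocation in which type i receives its budget-proportional share f_i of each user's supply allocated to its highest-value opportunities. -/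

import Mathlib

/-!
Write `b t = β (it t) * v t + βp * vp t` for the bid on impression `t`. Since `x t = 1`
exactly when `pu (jt t) ≤ b t`, the allocation `x` maximizes `∑ y t * (b t - pu (jt t))` over
`y ∈ [0,1]`; with the budget equation of type `i` this gives
`β i * ∑ x̄ v - ∑ x̄ pu ≤ β i * ∑ x v - B i` over the impressions of type `i`.
Complementary slackness in the supply constraints and the budget equations show that total
revenue `∑ j, pu j * s j` equals `Bp + ∑ k, B k`, so a bundle taking the fraction
`B i / (Bp + ∑ k, B k)` of every user's supply costs at most `B i`.
Dividing by `β i > 0` finishes.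
-/

open Finset

theorem mul_le_mul_of_threshold {R : Type*} [Ring R] [LinearOrder R] [IsStrictOrderedRing R]
    {a x y : R} (hy : y ∈ Set.Icc 0 1) (hx₁ : 0 ≤ a → x = 1) (hx₀ : a < 0 → x = 0) :
    y * a ≤ x * a := by
  rcases le_or_gt 0 a with ha | ha
  · rw [hx₁ ha, one_mul]
    exact mul_le_of_le_one_left ha hy.2
  · rw [hx₀ ha, zero_mul]
    exact mul_nonpos_of_nonneg_of_nonpos hy.1 ha.le

section Market

variable {ι κ : Type*} [Fintype ι] [Fintype κ] [DecidableEq κ]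
  (jt : ι → κ) (x : ι → ℝ) (pu s : κ → ℝ)

theorem sum_price_mul_supply_eq_sum_payment (hpu : ∀ j, 0 ≤ pu j)
    (hclear : ∀ j, 0 < pu j → ∑ t ∈ univ.filter (fun t => jt t = j), x t = s j) :
    ∑ j, pu j * s j = ∑ t, x t * pu (jt t) := by
  have hrevenue :
      ∀ j, pu j * s j = ∑ t ∈ univ.filter (fun t => jt t = j), x t * pu (jt t) := by
    intro j
    rw [sum_congr rfl fun t ht => by rw [(mem_filter.mp ht).2], ← sum_mul, mul_comm]
    rcases (hpu j).eq_or_lt with h | h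
    · simp [← h]
    · rw [hclear j h]
  simp only [hrevenue, sum_fiberwise]

theorem sum_mul_price_le_mul_sum_price_mul_supply {P : ι → Prop} [DecidablePred P]
    {y : ι → ℝ} {f : ℝ} (hpu : ∀ j, 0 ≤ pu j)
    (hy : ∀ j, ∑ t ∈ univ.filter (fun t => P t ∧ jt t = j), y t ≤ f * s j) :
    ∑ t ∈ univ.filter P, y t * pu (jt t) ≤ f * ∑ j, pu j * s j := by
  calc ∑ t ∈ univ.filter P, y t * pu (jt t)
      = ∑ j, (∑ t ∈ univ.filter (fun t => P t ∧ jt t = j), y t) * pu j := by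
        rw [← sum_fiberwise (univ.filter P) jt]
        refine sum_congr rfl fun j _ => ?_
        rw [filter_filter, sum_mul]
        exact sum_congr rfl fun t ht => by rw [(mem_filter.mp ht).2.2]
    _ ≤ ∑ j, f * s j * pu j :=
        sum_le_sum fun j _ => mul_le_mul_of_nonneg_right (hy j) (hpu j)
    _ = f * ∑ j, pu j * s j := by
        rw [mul_sum]
        exact sum_congr rfl fun j _ => by ring

end Market

theorem sum_payment_eq_sum_budget {ι ν κ : Type*} [Fintype ι] [Fintype ν] [DecidableEq ν]
    (it : ι → ν) (jt : ι → κ) (x q : ι → ℝ) (pu : κ → ℝ) (B : ν → ℝ) (Bp : ℝ)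
    (hbudget :
      ∀ i, ∑ t ∈ univ.filter (fun t => it t = i), x t * (pu (jt t) - q t) = B i)
    (hbudgetp : ∑ t, x t * q t = Bp) :
    ∑ t, x t * pu (jt t) = ∑ i, B i + Bp := by
  rw [← hbudgetp, ← sum_congr rfl fun i _ => hbudget i, sum_fiberwise, ← sum_add_distrib]
  exact sum_congr rfl fun t _ => by ring

theorem nSPPE_proportional_share_general
    (T n m : ℕ)
    (it : Fin T → Fin n) (jt : Fin T → Fin m)
    (v vp : Fin T → ℝ) (x : Fin T → ℝ)
    (B : Fin n → ℝ) (Bp : ℝ) (s : Fin m → ℝ)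
    (pu : Fin m → ℝ)
    (β : Fin n → ℝ) (βp : ℝ)
    (hvp : ∀ t, 0 ≤ vp t)
    (hB : ∀ i, 0 < B i) (hBp : 0 < Bp)
    (hpu : ∀ j, 0 ≤ pu j)
    (hβ : ∀ i, 0 < β i) (hβp : 0 ≤ βp)
    (halloc : ∀ t,
      (pu (jt t) ≤ β (it t) * v t + βp * vp t → x t = 1) ∧
      (β (it t) * v t + βp * vp t < pu (jt t) → x t = 0))
    (hsupply : ∀ j, (∑ t ∈ univ.filter (fun t => jt t = j), x t) ≤ s j ∧
      (0 < pu j → ∑ t ∈ univ.filter (fun t => jt t = j), x t = s j))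
    (hbudget : ∀ i, ∑ t ∈ univ.filter (fun t => it t = i),
      x t * (pu (jt t) - βp * vp t) = B i)
    (hbudgetp : ∑ t, x t * (βp * vp t) = Bp) :
    ∀ (i : Fin n) (xbar : Fin T → ℝ),
      (∀ t, it t = i → xbar t ∈ Set.Icc (0 : ℝ) 1) →
      (∀ j, (∑ t ∈ univ.filter (fun t => it t = i ∧ jt t = j), xbar t) ≤
        (B i / (Bp + ∑ k, B k)) * s j) →
      (∑ t ∈ univ.filter (fun t => it t = i), xbar t * v t) ≤
        ∑ t ∈ univ.filter (fun t => it t = i), x t * v t := by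
  intro i xbar hbar hfrac
  have hrevenue : ∑ j, pu j * s j = Bp + ∑ k, B k := by
    rw [sum_price_mul_supply_eq_sum_payment jt x pu s hpu fun j => (hsupply j).2,
      sum_payment_eq_sum_budget it jt x _ pu B Bp hbudget hbudgetp, add_comm]
  have hcost : ∑ t ∈ univ.filter (fun t => it t = i), xbar t * pu (jt t) ≤ B i := by
    have hpos : 0 < Bp + ∑ k, B k :=
      add_pos_of_pos_of_nonneg hBp (sum_nonneg fun k _ => (hB k).le)
    have := sum_mul_price_le_mul_sum_price_mul_supply jt pu s hpu hfrac
    rwa [hrevenue, div_mul_cancel₀ _ hpos.ne'] at this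
  have hdom : β i * ∑ t ∈ univ.filter (fun t => it t = i), xbar t * v t
        - ∑ t ∈ univ.filter (fun t => it t = i), xbar t * pu (jt t)
      ≤ β i * ∑ t ∈ univ.filter (fun t => it t = i), x t * v t - B i := by
    rw [← hbudget i, mul_sum, mul_sum, ← sum_sub_distrib, ← sum_sub_distrib]
    refine sum_le_sum fun t ht => ?_
    have hit : it t = i := (mem_filter.mp ht).2
    obtain ⟨hx₁, hx₀⟩ := halloc t
    rw [hit, ← sub_nonneg] at hx₁
    rw [hit, ← sub_neg] at hx₀
    have hopt := mul_le_mul_of_threshold (hbar t hit) hx₁ hx₀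
    linarith [mul_nonneg (hbar t hit).1 (mul_nonneg hβp (hvp t))]
  exact le_of_mul_le_mul_left (by linarith) (hβ i)

/-- **Proportional share guarantee in nSPPE (Proposition 5).** Under nSPPE
conditions (2)–(5), each notification type's utility is at least its proportional
share utility: for any bundle `x̄ ∈ [0,1]^{𝒯ᵢ}` using at most a fraction
`f i = B i / (Bp + ∑ k, B k)` of each user's supply, the utility of `x` for type `i`
is at least that of `x̄`. -/
theorem nSPPE_proportional_share
    (T n m : ℕ)
    (it : Fin T → Fin n) (jt : Fin T → Fin m)
    (v vp : Fin T → ℝ) (x : Fin T → ℝ)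
    (B : Fin n → ℝ) (Bp : ℝ) (s : Fin m → ℝ)
    (pu : Fin m → ℝ)
    (β : Fin n → ℝ) (βp : ℝ)
    (hv : ∀ t, 0 < v t) (hvp : ∀ t, 0 ≤ vp t)
    (hB : ∀ i, 0 < B i) (hBp : 0 < Bp) (hs : ∀ j, 0 < s j)
    (hpu : ∀ j, 0 ≤ pu j)
    (hβ : ∀ i, 0 < β i) (hβp : 0 ≤ βp)
    (halloc : ∀ t,
      (pu (jt t) ≤ β (it t) * v t + βp * vp t → x t = 1) ∧
      (β (it t) * v t + βp * vp t < pu (jt t) → x t = 0))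
    (hsupply : ∀ j, (∑ t ∈ univ.filter (fun t => jt t = j), x t) ≤ s j ∧
      (0 < pu j → ∑ t ∈ univ.filter (fun t => jt t = j), x t = s j))
    (hbudget : ∀ i, ∑ t ∈ univ.filter (fun t => it t = i),
      x t * (pu (jt t) - βp * vp t) = B i)
    (hbudgetp : ∑ t, x t * (βp * vp t) = Bp) :
    ∀ (i : Fin n) (xbar : Fin T → ℝ),
      (∀ t, it t = i → xbar t ∈ Set.Icc (0 : ℝ) 1) →
      (∀ j, (∑ t ∈ univ.filter (fun t => it t = i ∧ jt t = j), xbar t) ≤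
        (B i / (Bp + ∑ k, B k)) * s j) →
      (∑ t ∈ univ.filter (fun t => it t = i), xbar t * v t) ≤
        ∑ t ∈ univ.filter (fun t => it t = i), x t * v t :=
  nSPPE_proportional_share_general T n m it jt v vp x B Bp s pu β βp hvp hB hBp hpu hβ hβp halloc
    hsupply hbudget hbudgetp
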